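/- arXiv:1301.1140 — 6 statements merged into one kernel-verified Lean document; each statement's English description precedes it below -/
import Mathlib

section
/- Let V be a real vector space, Y ⊆ X ⊆ V, and let 𝔹 ⊆ ℝ be a subring. Let 𝔽 := {a/b : a, b ∈ 𝔹, b ≠ 0} ⊆ ℝ be the quotient field of 𝔹 inside ℝ. Then Y is a weak 𝔹-face of X if and only if Y is a weak 𝔽-face of X. -/
open Finsupp

/-- `R₊ := R ∩ [0,∞)`. -/
def Rplus (R : Set ℝ) : Set ℝ := R ∩ Set.Ici 0

/-- `ℓ(f) := Σ_v f(v)`. -/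
noncomputable def ell {V : Type*} [AddCommGroup V] [Module ℝ V] (f : V →₀ ℝ) : ℝ :=
  f.sum fun _ r => r

/-- `ℓ⃗(f) := Σ_v f(v) • v`. -/
noncomputable def vell {V : Type*} [AddCommGroup V] [Module ℝ V] (f : V →₀ ℝ) : V :=
  f.sum fun v r => r • v

/-- `f ∈ Fin(X,R)`: finitely supported, support in `X`, values in `R ∪ {0}`. -/
def IsFinSupp {V : Type*} [AddCommGroup V] [Module ℝ V] (X : Set V) (R : Set ℝ)
    (f : V →₀ ℝ) : Prop :=
  ↑f.support ⊆ X ∧ ∀ v, f v ∈ R ∪ {0}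

/-- `Y` is a weak `R`-face of `X`. -/
def IsWeakFace {V : Type*} [AddCommGroup V] [Module ℝ V] (X Y : Set V) (R : Set ℝ) : Prop :=
  ∀ f g : V →₀ ℝ, IsFinSupp X (Rplus R) f → IsFinSupp Y (Rplus R) g →
    ell f = ell g → 0 < ell g → vell f = vell g → ↑f.support ⊆ Y

/-- `Y` is a positive weak `R`-face of `X`. -/
def IsPosWeakFace {V : Type*} [AddCommGroup V] [Module ℝ V] (X Y : Set V) (R : Set ℝ) : Prop :=
  ∀ f g : V →₀ ℝ, IsFinSupp X (Rplus R) f → IsFinSupp Y (Rplus R) g →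
    vell f = vell g → ell g ≤ ell f ∧ (ell g = ell f ↔ ↑f.support ⊆ Y)

/-- `Y` is `(R',R)`-closed in `X`. -/
def IsRClosed {V : Type*} [AddCommGroup V] [Module ℝ V] (X Y : Set V) (R' R : Set ℝ) : Prop :=
  ∀ f g : V →₀ ℝ, IsFinSupp X R f → IsFinSupp Y R g →
    ell f = ell g → ell f ∈ R' → ell f ≠ 0 → vell f = vell g → ↑f.support ⊆ Y

/-- The maximizer set `X(φ)`. -/
def maximizer {V : Type*} [AddCommGroup V] [Module ℝ V] (X : Set V) (φ : V →ₗ[ℝ] ℝ) : Set V :=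
  {x | x ∈ X ∧ ∀ x' ∈ X, φ x' ≤ φ x}

/-!
Since `𝔹 ⊆ 𝔽`, every weak `𝔽`-face is a weak `𝔹`-face. Conversely, given `f, g` with
nonnegative values in `𝔽`, clearing the finitely many denominators yields `d ∈ 𝔹`, `d > 0`, with
`d • f` and `d • g` taking values in `𝔹₊`; both `ℓ` and `ℓ⃗` scale by `d`, so the weak `𝔹`-face
condition for `d • f, d • g` gives the one for `f, g`.
-/

section

variable {V : Type*} [AddCommGroup V] [Module ℝ V]

lemma ell_smul (d : ℝ) (f : V →₀ ℝ) : ell (d • f) = d * ell f := by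
  rw [ell, ell, sum_smul_index fun _ => rfl, mul_sum]

lemma vell_smul (d : ℝ) (f : V →₀ ℝ) : vell (d • f) = d • vell f := by
  rw [vell, vell, sum_smul_index fun v => zero_smul ℝ v, smul_sum]
  simp only [mul_smul]

lemma IsFinSupp.nonneg {X : Set V} {R : Set ℝ} {f : V →₀ ℝ} (hf : IsFinSupp X (Rplus R) f)
    (v : V) : 0 ≤ f v := by
  rcases hf.2 v with ⟨_, hv⟩ | hv
  exacts [hv, hv.ge]

lemma IsFinSupp.mono {X : Set V} {R S : Set ℝ} {f : V →₀ ℝ} (hf : IsFinSupp X R f)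
    (hRS : R ⊆ S) : IsFinSupp X S f :=
  ⟨hf.1, fun v => Set.union_subset_union_left _ hRS (hf.2 v)⟩

lemma IsFinSupp.rplus_smul {X : Set V} {R S : Set ℝ} {f : V →₀ ℝ} {d : ℝ}
    (hf : IsFinSupp X (Rplus S) f) (hd : 0 ≤ d) (hdf : ∀ v, d * f v ∈ R) :
    IsFinSupp X (Rplus R) (d • f) :=
  ⟨(Finset.coe_subset.2 support_smul).trans hf.1,
    fun v => Or.inl ⟨hdf v, mul_nonneg hd (hf.nonneg v)⟩⟩

lemma IsWeakFace.anti {X Y : Set V} {R S : Set ℝ} (h : IsWeakFace X Y S) (hRS : R ⊆ S) :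
    IsWeakFace X Y R := fun f g hf hg =>
  h f g (hf.mono (Set.inter_subset_inter_left _ hRS)) (hg.mono (Set.inter_subset_inter_left _ hRS))

lemma IsWeakFace.of_exists_smul {X Y : Set V} {R S : Set ℝ} (h : IsWeakFace X Y R)
    (hscale : ∀ f g : V →₀ ℝ, IsFinSupp X (Rplus S) f → IsFinSupp Y (Rplus S) g →
      ∃ d : ℝ, 0 < d ∧ IsFinSupp X (Rplus R) (d • f) ∧ IsFinSupp Y (Rplus R) (d • g)) :
    IsWeakFace X Y S := by
  intro f g hf hg hℓ hpos hv
  obtain ⟨d, hd, hdf, hdg⟩ := hscale f g hf hg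
  have hsupp := h (d • f) (d • g) hdf hdg (by rw [ell_smul, ell_smul, hℓ])
    (by rw [ell_smul]; positivity) (by rw [vell_smul, vell_smul, hv])
  rwa [support_smul_eq hd.ne'] at hsupp

end

section CommonDenominator

variable {K : Type*} [Field K] [LinearOrder K] [IsStrictOrderedRing K] (𝔹 : Subring K)

lemma exists_pos_mul_mem_of_mem_div {x : K} (hx : ∃ a ∈ 𝔹, ∃ b ∈ 𝔹, b ≠ 0 ∧ x = a / b) :
    ∃ b ∈ 𝔹, 0 < b ∧ b * x ∈ 𝔹 := by
  obtain ⟨a, ha, b, hb, hb0, rfl⟩ := hx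
  rcases hb0.lt_or_gt with hneg | hpos
  · exact ⟨-b, neg_mem hb, neg_pos.2 hneg, by rwa [neg_mul, mul_div_cancel₀ a hb0, neg_mem_iff]⟩
  · exact ⟨b, hb, hpos, by rwa [mul_div_cancel₀ a hb0]⟩

lemma exists_pos_common_denominator (s : Finset K)
    (hs : ∀ x ∈ s, ∃ a ∈ 𝔹, ∃ b ∈ 𝔹, b ≠ 0 ∧ x = a / b) :
    ∃ d ∈ 𝔹, 0 < d ∧ ∀ x ∈ s, d * x ∈ 𝔹 := by
  classical
  induction s using Finset.induction_on with
  | empty => exact ⟨1, one_mem _, one_pos, by simp⟩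
  | insert y s _ ih =>
    obtain ⟨d, hd𝔹, hd, hds⟩ := ih fun x hx => hs x (Finset.mem_insert_of_mem hx)
    obtain ⟨e, he𝔹, he, hey⟩ := exists_pos_mul_mem_of_mem_div 𝔹 (hs y (Finset.mem_insert_self y s))
    refine ⟨e * d, mul_mem he𝔹 hd𝔹, mul_pos he hd, ?_⟩
    rintro x hx
    rcases Finset.mem_insert.1 hx with rfl | hx
    · rw [mul_comm e, mul_assoc]; exact mul_mem hd𝔹 hey
    · rw [mul_assoc]; exact mul_mem he𝔹 (hds x hx)

end CommonDenominator

theorem statement1_general {V : Type*} [AddCommGroup V] [Module ℝ V]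
    (X Y : Set V) (𝔹 : Subring ℝ) :
    IsWeakFace X Y (𝔹 : Set ℝ) ↔
      IsWeakFace X Y {x : ℝ | ∃ a ∈ 𝔹, ∃ b ∈ 𝔹, b ≠ 0 ∧ x = a / b} := by
  classical
  refine ⟨fun h => h.of_exists_smul fun f g hf hg => ?_,
    fun h => h.anti fun a ha => ⟨a, ha, 1, one_mem _, one_ne_zero, (div_one a).symm⟩⟩
  have hfrac : ∀ x ∈ f.frange ∪ g.frange, ∃ a ∈ 𝔹, ∃ b ∈ 𝔹, b ≠ 0 ∧ x = a / b := by
    intro x hx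
    obtain ⟨hx0, v, rfl⟩ | ⟨hx0, v, rfl⟩ := (Finset.mem_union.1 hx).imp mem_frange.1 mem_frange.1
    exacts [((hf.2 v).resolve_right hx0).1, ((hg.2 v).resolve_right hx0).1]
  obtain ⟨d, -, hd, hdx⟩ := exists_pos_common_denominator 𝔹 _ hfrac
  have hmem : ∀ (h : V →₀ ℝ), h.frange ⊆ f.frange ∪ g.frange → ∀ v, d * h v ∈ 𝔹 := by
    intro h hsub v
    by_cases hv : h v = 0
    · rw [hv, mul_zero]; exact zero_mem _
    · exact hdx _ (hsub (mem_frange.2 ⟨hv, v, rfl⟩))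
  exact ⟨d, hd, hf.rplus_smul hd.le (hmem f Finset.subset_union_left),
    hg.rplus_smul hd.le (hmem g Finset.subset_union_right)⟩

/-- For a subring `𝔹 ⊆ ℝ` with quotient field `𝔽 = {a/b : a,b ∈ 𝔹, b ≠ 0}`,
`Y` is a weak `𝔹`-face of `X` iff it is a weak `𝔽`-face of `X`. -/
theorem statement1 {V : Type*} [AddCommGroup V] [Module ℝ V]
    (X Y : Set V) (hYX : Y ⊆ X) (𝔹 : Subring ℝ) :
    IsWeakFace X Y (𝔹 : Set ℝ) ↔
      IsWeakFace X Y {x : ℝ | ∃ a ∈ 𝔹, ∃ b ∈ 𝔹, b ≠ 0 ∧ x = a / b} :=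
  statement1_general X Y 𝔹
end

section
/- Let V be a real vector space, X ⊆ V, R ⊆ ℝ, and φ : V → ℝ a linear functional such that φ(x) > 0 for some x ∈ X. Then the maximizer set X(φ) is a positive weak R-face of X. -/
open Finsupp

lemma phi_vell {V : Type*} [AddCommGroup V] [Module ℝ V] (φ : V →ₗ[ℝ] ℝ) (f : V →₀ ℝ) :
    φ (vell f) = ∑ v ∈ f.support, f v * φ v := by
  rw [vell, Finsupp.sum, map_sum]
  exact Finset.sum_congr rfl fun v _ => by simp [smul_eq_mul]

lemma phi_vell_const {V : Type*} [AddCommGroup V] [Module ℝ V] (φ : V →ₗ[ℝ] ℝ)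
    (f : V →₀ ℝ) (m : ℝ) (h : ∀ v ∈ f.support, φ v = m) : φ (vell f) = m * ell f := by
  rw [phi_vell, ell, Finsupp.sum, Finset.mul_sum]
  exact Finset.sum_congr rfl fun v hv => by rw [h v hv, mul_comm]

/-- If `φ(x) > 0` for some `x ∈ X`, then `X(φ)` is a positive weak
`R`-face of `X`. -/
theorem statement6 {V : Type*} [AddCommGroup V] [Module ℝ V]
    (X : Set V) (R : Set ℝ) (φ : V →ₗ[ℝ] ℝ) (hx : ∃ x ∈ X, 0 < φ x) :
    IsPosWeakFace X (maximizer X φ) R := by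
  obtain ⟨x₀, hx₀X, hx₀⟩ := hx
  intro f g hf hg hv
  have fpos : ∀ v, 0 ≤ f v := by
    intro v
    rcases hf.2 v with h | h
    · exact h.2
    · simp only [Set.mem_singleton_iff] at h; simp [h]
  have ellf_nonneg : 0 ≤ ell f := Finset.sum_nonneg fun v _ => fpos v
  -- if supp f ⊆ maximizer and m is the max value, then φ(vell f) = m * ell f
  have key : ∀ (h : V →₀ ℝ), (↑h.support : Set V) ⊆ maximizer X φ →
      ∀ m, (∀ v ∈ maximizer X φ, φ v = m) → φ (vell h) = m * ell h := by
    intro h hsub m hm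
    exact phi_vell_const φ h m fun v hv => hm v (hsub hv)
  rcases eq_or_ne g 0 with rfl | hg0
  · have ellg : ell (0 : V →₀ ℝ) = 0 := by simp [ell]
    rw [ellg]
    have hv0 : vell f = 0 := by simpa [vell] using hv
    constructor
    · exact ellf_nonneg
    constructor
    · intro h0
      have : ∀ v ∈ f.support, f v = 0 := by
        intro v hvv
        have := (Finset.sum_eq_zero_iff_of_nonneg fun v _ => fpos v).mp h0.symm
        exact this v hvv
      intro v hvv
      exact absurd (this v hvv) (Finsupp.mem_support_iff.mp hvv)
    · intro hsub
      rcases eq_or_ne f 0 with rfl | hf0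
      · simp [ell]
      · obtain ⟨v₀, hv₀⟩ := Finsupp.support_nonempty_iff.mpr hf0
        have hv₀m : v₀ ∈ maximizer X φ := hsub hv₀
        have hm : ∀ v ∈ maximizer X φ, φ v = φ v₀ :=
          fun v hvm => le_antisymm (hv₀m.2 v hvm.1) (hvm.2 v₀ hv₀m.1)
        have hmpos : 0 < φ v₀ := lt_of_lt_of_le hx₀ (hv₀m.2 x₀ hx₀X)
        have := key f hsub (φ v₀) hm
        rw [hv0, map_zero] at this
        exact ((mul_eq_zero.mp this.symm).resolve_left (ne_of_gt hmpos)).symm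
  · obtain ⟨v₀, hv₀⟩ := Finsupp.support_nonempty_iff.mpr hg0
    have hv₀m : v₀ ∈ maximizer X φ := hg.1 hv₀
    set m := φ v₀ with hmdef
    have hm : ∀ v ∈ maximizer X φ, φ v = m :=
      fun v hvm => le_antisymm (hv₀m.2 v hvm.1) (hvm.2 v₀ hv₀m.1)
    have hmpos : 0 < m := lt_of_lt_of_le hx₀ (hv₀m.2 x₀ hx₀X)
    have hgval : φ (vell g) = m * ell g := key g hg.1 m hm
    have hfle : φ (vell f) ≤ m * ell f := by
      rw [phi_vell, ell, Finsupp.sum, Finset.mul_sum]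
      apply Finset.sum_le_sum
      intro v hvv
      rw [mul_comm m (f v)]
      exact mul_le_mul_of_nonneg_left (hv₀m.2 v (hf.1 hvv)) (fpos v)
    have hkey : m * ell g ≤ m * ell f := by rw [← hgval, ← hv]; exact hfle
    have hle : ell g ≤ ell f := le_of_mul_le_mul_left hkey hmpos
    refine ⟨hle, ?_, ?_⟩
    · intro heq
      have hsum : ∑ v ∈ f.support, f v * (m - φ v) = 0 := by
        have h1 : φ (vell f) = m * ell f := by rw [hv, hgval, heq]
        rw [phi_vell] at h1
        have : ∑ v ∈ f.support, f v * (m - φ v)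
            = m * ell f - ∑ v ∈ f.support, f v * φ v := by
          rw [ell, Finsupp.sum, Finset.mul_sum, ← Finset.sum_sub_distrib]
          exact Finset.sum_congr rfl fun v _ => by ring
        rw [this, ← h1, sub_self]
      intro v hvv
      have hvX : v ∈ X := hf.1 hvv
      have hterm := (Finset.sum_eq_zero_iff_of_nonneg fun v hvv =>
        mul_nonneg (fpos v) (sub_nonneg.mpr (hv₀m.2 v (hf.1 hvv)))).mp hsum v hvv
      have hfv : f v ≠ 0 := Finsupp.mem_support_iff.mp hvv
      have : m - φ v = 0 := (mul_eq_zero.mp hterm).resolve_left hfv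
      have hφv : φ v = m := by linarith
      exact ⟨hvX, fun x' hx' => hφv ▸ hm v₀ hv₀m ▸ hv₀m.2 x' hx'⟩
    · intro hsub
      have hfval : φ (vell f) = m * ell f := key f hsub m hm
      have : m * ell g = m * ell f := by rw [← hgval, ← hv, hfval]
      exact mul_left_cancel₀ (ne_of_gt hmpos) this
end

section
/- Let V be a real vector space, Y ⊆ X ⊆ V, and 𝔸 a nonzero additive subgroup of (ℝ,+). Then Y is a positive weak 𝔸-face of X if and only if 0 ∉ Y and Y is a weak 𝔸-face of X ∪ {0}. -/
open Finsupp

section Aux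

variable {V : Type*} [AddCommGroup V] [Module ℝ V]

lemma ell_add' (f g : V →₀ ℝ) : ell (f + g) = ell f + ell g := by
  unfold ell; exact Finsupp.sum_add_index' (fun _ => rfl) (fun _ _ _ => rfl)

lemma vell_add' (f g : V →₀ ℝ) : vell (f + g) = vell f + vell g := by
  unfold vell
  exact Finsupp.sum_add_index' (fun v => zero_smul ℝ v) (fun v r s => add_smul r s v)

lemma ell_single' (v : V) (a : ℝ) : ell (Finsupp.single v a) = a := by
  unfold ell; exact Finsupp.sum_single_index rfl

lemma vell_single' (v : V) (a : ℝ) : vell (Finsupp.single v a) = a • v := by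
  unfold vell; exact Finsupp.sum_single_index (zero_smul ℝ v)

lemma ell_nonneg' {R : Set ℝ} {f : V →₀ ℝ} (hf : ∀ v, f v ∈ Rplus R ∪ {0}) : 0 ≤ ell f := by
  apply Finset.sum_nonneg
  intro v _
  rcases hf v with h | h
  · exact h.2
  · simp only [Set.mem_singleton_iff] at h; rw [h]

lemma ell_mem' {𝔸 : AddSubgroup ℝ} {f : V →₀ ℝ}
    (hf : ∀ v, f v ∈ Rplus (𝔸 : Set ℝ) ∪ {0}) : ell f ∈ 𝔸 := by
  apply AddSubgroup.sum_mem
  intro v _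
  rcases hf v with h | h
  · exact h.1
  · simp only [Set.mem_singleton_iff] at h; rw [h]; exact zero_mem _

lemma eq_zero_of_ell_eq_zero' {R : Set ℝ} {f : V →₀ ℝ} (hf : ∀ v, f v ∈ Rplus R ∪ {0})
    (h : ell f = 0) : f = 0 := by
  have hnn : ∀ v, 0 ≤ f v := by
    intro v
    rcases hf v with h' | h'
    · exact h'.2
    · simp only [Set.mem_singleton_iff] at h'; rw [h']
  ext v
  by_contra hv
  have hvsupp : v ∈ f.support := Finsupp.mem_support_iff.mpr (by simpa using hv)
  have := (Finset.sum_eq_zero_iff_of_nonneg (fun i _ => hnn i)).mp h v hvsupp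
  simp [this] at hv

end Aux

/-- `Y` is a positive weak `𝔸`-face of `X` iff `0 ∉ Y` and `Y` is a
weak `𝔸`-face of `X ∪ {0}`. -/
theorem statement7 {V : Type*} [AddCommGroup V] [Module ℝ V]
    (X Y : Set V) (hYX : Y ⊆ X) (𝔸 : AddSubgroup ℝ) (h𝔸 : 𝔸 ≠ ⊥) :
    IsPosWeakFace X Y (𝔸 : Set ℝ) ↔
      (0 : V) ∉ Y ∧ IsWeakFace (X ∪ {0}) Y (𝔸 : Set ℝ) := by
  classical
  obtain ⟨a, ha𝔸, hapos⟩ : ∃ a ∈ 𝔸, 0 < a := by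
    rw [Ne, AddSubgroup.eq_bot_iff_forall] at h𝔸
    push_neg at h𝔸
    obtain ⟨a, ha, hne⟩ := h𝔸
    rcases lt_or_gt_of_ne hne with h | h
    · exact ⟨-a, neg_mem ha, by linarith⟩
    · exact ⟨a, ha, h⟩
  constructor
  · intro hP
    constructor
    · intro h0Y
      have hg : IsFinSupp Y (Rplus (𝔸 : Set ℝ)) (Finsupp.single (0 : V) a) := by
        constructor
        · intro v hv
          have h := Finsupp.support_single_subset (Finset.mem_coe.mp hv)
          simp only [Finset.mem_singleton] at h
          subst h; exact h0Y
        · intro v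
          rcases eq_or_ne v 0 with rfl | h
          · left
            rw [Finsupp.single_eq_same]
            exact Set.mem_inter ha𝔸 (le_of_lt hapos)
          · right; simp [Finsupp.single_apply, Ne.symm h]
      have hf : IsFinSupp X (Rplus (𝔸 : Set ℝ)) (0 : V →₀ ℝ) := by
        constructor
        · simp
        · intro v; right; simp
      have hv : vell (0 : V →₀ ℝ) = vell (Finsupp.single (0 : V) a) := by
        rw [vell_single', smul_zero]
        unfold vell; simp
      have := (hP 0 (Finsupp.single 0 a) hf hg hv).1
      rw [ell_single'] at this
      have h0 : ell (0 : V →₀ ℝ) = 0 := by unfold ell; simp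
      rw [h0] at this
      linarith
    · intro f g hf hg hlf hpos hv
      set f' := f.erase 0 with hf'def
      have hsplit : Finsupp.single 0 (f 0) + f' = f := Finsupp.single_add_erase 0 f
      have hellf : ell f = f 0 + ell f' := by
        conv_lhs => rw [← hsplit]
        rw [ell_add', ell_single']
      have hvellf : vell f = vell f' := by
        conv_lhs => rw [← hsplit]
        rw [vell_add', vell_single', smul_zero, zero_add]
      have hf' : IsFinSupp X (Rplus (𝔸 : Set ℝ)) f' := by
        constructor
        · intro v hv'
          have hv2 : v ∈ f.support ∧ v ≠ 0 := by
            have : v ∈ f'.support := Finset.mem_coe.mp hv'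
            rw [hf'def, Finsupp.support_erase, Finset.mem_erase] at this
            exact ⟨this.2, this.1⟩
          rcases hf.1 hv2.1 with h | h
          · exact h
          · exact absurd h hv2.2
        · intro v
          rcases eq_or_ne v 0 with rfl | h
          · right; simp [hf'def]
          · rw [hf'def, Finsupp.erase_ne h]; exact hf.2 v
      obtain ⟨hle, hiff⟩ := hP f' g hf' hg (hvellf ▸ hv)
      have hf0nn : 0 ≤ f 0 := by
        rcases hf.2 0 with h | h
        · exact h.2
        · simp only [Set.mem_singleton_iff] at h; rw [h]
      have hf0 : f 0 = 0 := by
        rw [hlf] at hellf; linarith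
      have heq : ell g = ell f' := by rw [hlf] at hellf; linarith
      have hsupp : ↑f'.support ⊆ Y := hiff.mp heq
      have : f = f' := by rw [← hsplit, hf0]; simp
      rw [this]; exact hsupp
  · rintro ⟨h0Y, hW⟩ f g hf hg hv
    have hfnn : 0 ≤ ell f := ell_nonneg' hf.2
    have hgnn : 0 ≤ ell g := ell_nonneg' hg.2
    have hf𝔸 : ell f ∈ 𝔸 := ell_mem' hf.2
    have hg𝔸 : ell g ∈ 𝔸 := ell_mem' hg.2
    have h1 : ell g ≤ ell f := by
      by_contra h
      push_neg at h
      set c := ell g - ell f with hc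
      have hcpos : 0 < c := by simp [hc]; linarith
      have hc𝔸 : c ∈ 𝔸 := sub_mem hg𝔸 hf𝔸
      set f' := f + Finsupp.single 0 c with hf'def
      have hf'0 : f' 0 = f 0 + c := by simp [hf'def]
      have hf0nn : 0 ≤ f 0 := by
        rcases hf.2 0 with h' | h'
        · exact h'.2
        · simp only [Set.mem_singleton_iff] at h'; rw [h']
      have hf0𝔸 : f 0 ∈ 𝔸 := by
        rcases hf.2 0 with h' | h'
        · exact h'.1
        · simp only [Set.mem_singleton_iff] at h'; rw [h']; exact zero_mem _
      have hf' : IsFinSupp (X ∪ {0}) (Rplus (𝔸 : Set ℝ)) f' := by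
        constructor
        · intro v hv'
          simp only [Finset.mem_coe] at hv'
          have := Finsupp.support_add hv'
          rcases Finset.mem_union.mp this with h' | h'
          · exact Or.inl (hf.1 h')
          · have := Finsupp.support_single_subset h'
            simp only [Finset.mem_singleton] at this
            right; simp [this]
        · intro v
          rcases eq_or_ne v 0 with rfl | hne
          · left
            rw [hf'0]
            exact Set.mem_inter (add_mem hf0𝔸 hc𝔸) (by simp only [Set.mem_Ici]; linarith)
          · have : f' v = f v := by simp [hf'def, Finsupp.single_apply, Ne.symm hne]
            rw [this]; exact hf.2 v
      have hellf' : ell f' = ell g := by rw [hf'def, ell_add', ell_single']; simp [hc]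
      have hvellf' : vell f' = vell g := by
        rw [hf'def, vell_add', vell_single', smul_zero, add_zero]; exact hv
      have hgpos : 0 < ell g := lt_of_le_of_lt hfnn h
      have hsupp := hW f' g hf' hg hellf' hgpos hvellf'
      have h0supp : (0 : V) ∈ f'.support := by
        rw [Finsupp.mem_support_iff, hf'0]
        have : 0 < f 0 + c := by linarith
        exact this.ne'
      exact h0Y (hsupp h0supp)
    refine ⟨h1, ?_, ?_⟩
    · intro heq
      rcases eq_or_lt_of_le hfnn with h0 | h0
      · have : f = 0 := eq_zero_of_ell_eq_zero' hf.2 h0.symm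
        rw [this]; simp
      · have hgpos : 0 < ell g := heq ▸ h0
        exact hW f g ⟨fun v hv' => Or.inl (hf.1 hv'), hf.2⟩ hg heq.symm hgpos hv
    · intro hsupp
      by_contra hne
      have hlt : ell g < ell f := lt_of_le_of_ne h1 hne
      set c := ell f - ell g with hc
      have hcpos : 0 < c := by simp [hc]; linarith
      have hc𝔸 : c ∈ 𝔸 := sub_mem hf𝔸 hg𝔸
      set g' := g + Finsupp.single 0 c with hg'def
      have hg'0 : g' 0 = g 0 + c := by simp [hg'def]
      have hg0nn : 0 ≤ g 0 := by
        rcases hg.2 0 with h' | h'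
        · exact h'.2
        · simp only [Set.mem_singleton_iff] at h'; rw [h']
      have hg0𝔸 : g 0 ∈ 𝔸 := by
        rcases hg.2 0 with h' | h'
        · exact h'.1
        · simp only [Set.mem_singleton_iff] at h'; rw [h']; exact zero_mem _
      have hg' : IsFinSupp (X ∪ {0}) (Rplus (𝔸 : Set ℝ)) g' := by
        constructor
        · intro v hv'
          simp only [Finset.mem_coe] at hv'
          have := Finsupp.support_add hv'
          rcases Finset.mem_union.mp this with h' | h'
          · exact Or.inl (hYX (hg.1 h'))
          · have := Finsupp.support_single_subset h'
            simp only [Finset.mem_singleton] at this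
            right; simp [this]
        · intro v
          rcases eq_or_ne v 0 with rfl | hne'
          · left
            rw [hg'0]
            exact Set.mem_inter (add_mem hg0𝔸 hc𝔸) (by simp only [Set.mem_Ici]; linarith)
          · have : g' v = g v := by simp [hg'def, Finsupp.single_apply, Ne.symm hne']
            rw [this]; exact hg.2 v
      have hellg' : ell g' = ell f := by rw [hg'def, ell_add', ell_single']; simp [hc]
      have hvellg' : vell g' = vell f := by
        rw [hg'def, vell_add', vell_single', smul_zero, add_zero]; exact hv.symm
      have hfpos : 0 < ell f := lt_of_le_of_lt hgnn hlt
      have hfY : IsFinSupp Y (Rplus (𝔸 : Set ℝ)) f := ⟨hsupp, hf.2⟩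
      have hsupp' := hW g' f hg' hfY hellg' hfpos hvellg'
      have h0supp : (0 : V) ∈ g'.support := by
        rw [Finsupp.mem_support_iff, hg'0]
        have : 0 < g 0 + c := by linarith
        exact this.ne'
      exact h0Y (hsupp' h0supp)
end

section
/- Let V be a real vector space, Δ ⊆ V a finite linearly independent subset, λ ∈ V, and X ⊆ λ − ℤ₊Δ a subset with λ ∈ X. Let J ⊆ Δ, and let φ : V → ℝ be a linear functional with φ(α) = 0 for all α ∈ J and φ(α) > 0 for all α ∈ Δ ∖ J. Then the maximizer set X(φ) equals X ∩ (λ − ℤ₊J). -/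
open Finsupp

/-!
Since `φ` is nonnegative on `Δ`, it is nonnegative on `ℤ₊Δ`, and `φ q = 0` for `q ∈ ℤ₊Δ` only if
`q` is a sum of elements of `Δ` killed by `φ`, i.e. of elements of `J`. Hence `φ` attains its
maximum on `X ⊆ λ − ℤ₊Δ` at `λ`, and `λ − q ∈ X` is a maximizer iff `q ∈ ℤ₊J`.
-/

namespace AddSubmonoid

variable {M N F : Type*} [AddCommMonoid M] [AddCommMonoid N] [FunLike F M N]
  [AddMonoidHomClass F M N] {φ : F} {S : Set M} {q : M}

theorem apply_eq_zero_of_mem_closure (hS : ∀ s ∈ S, φ s = 0) (hq : q ∈ closure S) :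
    φ q = 0 :=
  closure_le (S := AddMonoidHom.mker (φ : M →+ N)) |>.2 hS hq

variable [PartialOrder N] [IsOrderedAddMonoid N]

theorem apply_nonneg_of_mem_closure (hS : ∀ s ∈ S, 0 ≤ φ s) (hq : q ∈ closure S) : 0 ≤ φ q := by
  induction hq using closure_induction with
  | mem s hs => exact hS s hs
  | zero => simp
  | add a b _ _ ha hb => simpa using add_nonneg ha hb

theorem mem_closure_setOf_apply_eq_zero (hS : ∀ s ∈ S, 0 ≤ φ s) (hq : q ∈ closure S)
    (hφq : φ q = 0) : q ∈ closure {s ∈ S | φ s = 0} := by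
  induction hq using closure_induction with
  | mem s hs => exact subset_closure ⟨hs, hφq⟩
  | zero => exact zero_mem _
  | add a b ha hb iha ihb =>
    rw [map_add] at hφq
    obtain ⟨ha0, hb0⟩ := (add_eq_zero_iff_of_nonneg (apply_nonneg_of_mem_closure hS ha)
      (apply_nonneg_of_mem_closure hS hb)).1 hφq
    exact add_mem (iha ha0) (ihb hb0)

end AddSubmonoid

theorem maximizer_eq_setOf_apply_eq {V : Type*} [AddCommGroup V] [Module ℝ V] {X : Set V}
    {φ : V →ₗ[ℝ] ℝ} {lam : V} (hlam : lam ∈ X) (hle : ∀ x ∈ X, φ x ≤ φ lam) :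
    maximizer X φ = {x ∈ X | φ x = φ lam} := by
  ext x
  exact ⟨fun ⟨hx, hmax⟩ => ⟨hx, (hle x hx).antisymm (hmax lam hlam)⟩,
    fun ⟨hx, heq⟩ => ⟨hx, fun x' hx' => heq ▸ hle x' hx'⟩⟩

theorem statement13_general {V : Type*} [AddCommGroup V] [Module ℝ V]
    (Δ : Set V)
    (lam : V) (X : Set V)
    (hX : X ⊆ {x : V | ∃ q ∈ AddSubmonoid.closure Δ, x = lam - q})
    (hlam : lam ∈ X)
    (J : Set V)
    (φ : V →ₗ[ℝ] ℝ) (hJ0 : ∀ α ∈ J, φ α = 0) (hpos : ∀ α ∈ Δ \ J, 0 < φ α) :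
    maximizer X φ = X ∩ {x : V | ∃ q ∈ AddSubmonoid.closure J, x = lam - q} := by
  have hΔ : ∀ α ∈ Δ, 0 ≤ φ α := fun α hα => by
    by_cases hαJ : α ∈ J
    exacts [(hJ0 α hαJ).ge, (hpos α ⟨hα, hαJ⟩).le]
  have hker : {α ∈ Δ | φ α = 0} ⊆ J := fun α ⟨hα, hα0⟩ => by
    by_contra hαJ
    exact (hpos α ⟨hα, hαJ⟩).ne' hα0
  have hle : ∀ x ∈ X, φ x ≤ φ lam := fun x hx => by
    obtain ⟨q, hq, rfl⟩ := hX hx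
    simpa using AddSubmonoid.apply_nonneg_of_mem_closure hΔ hq
  rw [maximizer_eq_setOf_apply_eq hlam hle]
  ext x
  constructor
  · rintro ⟨hx, hφx⟩
    obtain ⟨q, hq, rfl⟩ := hX hx
    have hφq : φ q = 0 := by simpa using hφx
    exact ⟨hx, q, AddSubmonoid.closure_mono hker
      (AddSubmonoid.mem_closure_setOf_apply_eq_zero hΔ hq hφq), rfl⟩
  · rintro ⟨hx, q, hq, rfl⟩
    exact ⟨hx, by simp [AddSubmonoid.apply_eq_zero_of_mem_closure hJ0 hq]⟩

/-- If `X ⊆ λ − ℤ₊Δ` contains `λ`, `J ⊆ Δ`, and `φ` is a linear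
functional vanishing on `J` and positive on `Δ ∖ J`, then `X(φ) = X ∩ (λ − ℤ₊J)`.
Here `ℤ₊Δ'` is the additive submonoid generated by `Δ'` (nonnegative integer
combinations). -/
theorem statement13 {V : Type*} [AddCommGroup V] [Module ℝ V]
    (Δ : Set V) (hfin : Δ.Finite)
    (hind : LinearIndependent ℝ (fun x : Δ => (x : V)))
    (lam : V) (X : Set V)
    (hX : X ⊆ {x : V | ∃ q ∈ AddSubmonoid.closure Δ, x = lam - q})
    (hlam : lam ∈ X)
    (J : Set V) (hJ : J ⊆ Δ)
    (φ : V →ₗ[ℝ] ℝ) (hJ0 : ∀ α ∈ J, φ α = 0) (hpos : ∀ α ∈ Δ \ J, 0 < φ α) :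
    maximizer X φ = X ∩ {x : V | ∃ q ∈ AddSubmonoid.closure J, x = lam - q} :=
  statement13_general Δ lam X hX hlam J φ hJ0 hpos
end

section
/- Let V be a real vector space, Δ ⊆ V a finite linearly independent subset, λ ∈ V, and X ⊆ λ − ℤ₊Δ a subset such that: (i) λ − α ∈ X for every α ∈ Δ; and (ii) for every μ ∈ X there exist N ≥ 0 and elements μ₀ = λ, μ₁, …, μ_N = μ of X with μ_{j−1} − μ_j ∈ Δ for all 1 ≤ j ≤ N. Suppose Y ⊆ X satisfies λ ∈ Y and Y is ({2},{1,2})-closed in X, i.e., whenever y₁ + y₂ = x₁ + x₂ with y₁, y₂ ∈ Y and x₁, x₂ ∈ X (repetitions allowed), one has x₁, x₂ ∈ Y. Then Y = X ∩ (λ − ℤ₊Δ'), where Δ' := {α ∈ Δ : λ − α ∈ Y}. -/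
open Finsupp

/-!
Write `α_j := c_{j-1} - c_j` for the steps of a chain `λ = c_0, …, c_N = μ` in `X`. The identity
`c_j + λ = c_{j-1} + (λ - α_j)` is a relation `y₁ + y₂ = x₁ + x₂` between four points of `X`, so
closedness of `Y` moves membership along the chain in both directions: if `c_j ∈ Y` then
`c_{j-1} ∈ Y` and `λ - α_j ∈ Y`; conversely, if `c_{j-1} ∈ Y` and `λ - α_j ∈ Y` then `c_j ∈ Y`.
Walking down a chain ending in `y ∈ Y` shows every step lies in `Δ'`, so `y ∈ λ - ℤ₊Δ'`. For
`μ = λ - q` with `q ∈ ℤ₊Δ'`, the steps of a chain to `μ` sum to `q`; by linear independence the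
steps are exactly the elements of a decomposition of `q` over `Δ'`, so walking up puts `μ ∈ Y`.
-/

theorem Fin.sum_univ_castSucc_sub_succ {M : Type*} [AddCommGroup M] :
    ∀ {n : ℕ} (f : Fin (n + 1) → M), ∑ i : Fin n, (f i.castSucc - f i.succ) = f 0 - f (last n)
  | 0, f => by simp
  | n + 1, f => by
    rw [Fin.sum_univ_succ]
    simp only [← Fin.succ_castSucc]
    rw [Fin.sum_univ_castSucc_sub_succ (fun i => f i.succ)]
    simp

theorem LinearIndependent.mem_of_sum_mem_closure {ι κ M : Type*} [AddCommMonoid M]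
    {v : ι → M} (hv : LinearIndependent ℕ v) {s : Set ι} {t : Finset κ} {f : κ → ι}
    (h : ∑ k ∈ t, v (f k) ∈ AddSubmonoid.closure (v '' s)) {k : κ} (hk : k ∈ t) : f k ∈ s := by
  classical
  set a : ι →₀ ℕ := ∑ k ∈ t, Finsupp.single (f k) 1
  have ha : Finsupp.linearCombination ℕ v a = ∑ k ∈ t, v (f k) := by
    simp only [a, map_sum, Finsupp.linearCombination_single, one_smul]
  rw [← Submodule.span_nat_eq_addSubmonoidClosure, Submodule.mem_toAddSubmonoid, ← ha,
    Finsupp.mem_span_image_iff_linearCombination] at h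
  obtain ⟨l, hl, hla⟩ := h
  have ha_supported : a ∈ Finsupp.supported ℕ ℕ s := hv hla ▸ hl
  have hk_support : f k ∈ a.support := by simpa [a] using ⟨k, hk, by simp⟩
  exact ha_supported hk_support

section PairClosed

variable {V : Type*} [AddCommGroup V]

/-- `({2},{1,2})`-closedness, i.e. `IsRClosed X Y {2} {1, 2}`, written out on pairs of points. -/
def IsPairClosed (X Y : Set V) : Prop :=
  ∀ y₁ ∈ Y, ∀ y₂ ∈ Y, ∀ x₁ ∈ X, ∀ x₂ ∈ X, y₁ + y₂ = x₁ + x₂ → x₁ ∈ Y ∧ x₂ ∈ Y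

variable {X Y : Set V} {lam a b : V}

theorem IsPairClosed.mem_and_shift_mem (hcl : IsPairClosed X Y) (hlam : lam ∈ Y) (ha : a ∈ X)
    (hb : b ∈ Y) (hab : lam - (a - b) ∈ X) : a ∈ Y ∧ lam - (a - b) ∈ Y :=
  hcl b hb lam hlam a ha _ hab (by abel)

theorem IsPairClosed.mem_of_shift_mem (hcl : IsPairClosed X Y) (hlam : lam ∈ X) (ha : a ∈ Y)
    (hab : lam - (a - b) ∈ Y) (hb : b ∈ X) : b ∈ Y :=
  (hcl a ha _ hab b hb lam hlam (by abel)).1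

variable {N : ℕ} {c : Fin (N + 1) → V}

theorem IsPairClosed.shift_mem_of_last_mem (hcl : IsPairClosed X Y) (hlam : lam ∈ Y)
    (hcX : ∀ i, c i ∈ X) (hshift : ∀ j : Fin N, lam - (c j.castSucc - c j.succ) ∈ X)
    (hlast : c (Fin.last N) ∈ Y) (j : Fin N) : lam - (c j.castSucc - c j.succ) ∈ Y := by
  have hcY : ∀ i, c i ∈ Y :=
    Fin.reverseInduction hlast fun i hi => (hcl.mem_and_shift_mem hlam (hcX _) hi (hshift i)).1
  exact (hcl.mem_and_shift_mem hlam (hcX _) (hcY j.succ) (hshift j)).2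

theorem IsPairClosed.last_mem_of_shift_mem (hcl : IsPairClosed X Y) (hlam : lam ∈ X)
    (hcX : ∀ i, c i ∈ X) (hshift : ∀ j : Fin N, lam - (c j.castSucc - c j.succ) ∈ Y)
    (h0 : c 0 ∈ Y) : c (Fin.last N) ∈ Y :=
  Fin.induction (motive := fun i => c i ∈ Y) h0
    (fun j hj => hcl.mem_of_shift_mem hlam hj (hshift j) (hcX _)) _

end PairClosed

theorem statement14_general {V : Type*} [AddCommGroup V] [Module ℝ V]
    (Δ : Set V)
    (hind : LinearIndependent ℝ (fun x : Δ => (x : V)))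
    (lam : V) (X : Set V)
    (h1 : ∀ α ∈ Δ, lam - α ∈ X)
    (h2 : ∀ μ ∈ X, ∃ (N : ℕ) (c : Fin (N + 1) → V),
      c 0 = lam ∧ c (Fin.last N) = μ ∧ (∀ j, c j ∈ X) ∧
      ∀ j : Fin N, c j.castSucc - c j.succ ∈ Δ)
    (Y : Set V) (hYX : Y ⊆ X) (hlamY : lam ∈ Y)
    (hcl : ∀ y₁ ∈ Y, ∀ y₂ ∈ Y, ∀ x₁ ∈ X, ∀ x₂ ∈ X,
      y₁ + y₂ = x₁ + x₂ → x₁ ∈ Y ∧ x₂ ∈ Y) :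
    Y = X ∩ {x : V | ∃ q ∈ AddSubmonoid.closure {α ∈ Δ | lam - α ∈ Y}, x = lam - q} := by
  have hcl : IsPairClosed X Y := hcl
  ext x
  constructor
  · intro hx
    obtain ⟨N, c, hc0, hcN, hcX, hstep⟩ := h2 x (hYX hx)
    have hΔ' := hcl.shift_mem_of_last_mem hlamY hcX (fun j => h1 _ (hstep j)) (hcN ▸ hx)
    refine ⟨hYX hx, ∑ j, (c j.castSucc - c j.succ),
      AddSubmonoid.sum_mem _ fun j _ => AddSubmonoid.subset_closure ⟨hstep j, hΔ' j⟩, ?_⟩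
    rw [Fin.sum_univ_castSucc_sub_succ, hc0, hcN, sub_sub_cancel]
  · rintro ⟨hxX, q, hq, rfl⟩
    obtain ⟨N, c, hc0, hcN, hcX, hstep⟩ := h2 _ hxX
    have hsum : ∑ j, ((⟨_, hstep j⟩ : Δ) : V) = q := by
      rw [Fin.sum_univ_castSucc_sub_succ, hc0, hcN, sub_sub_cancel]
    have hΔ' (j : Fin N) : lam - (c j.castSucc - c j.succ) ∈ Y :=
      (hind.restrict_scalars' ℕ).mem_of_sum_mem_closure (s := {α | lam - α ∈ Y})
        (by rw [hsum]; convert hq using 2; ext; simp [and_comm]) (Finset.mem_univ j)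
    exact hcN ▸ hcl.last_mem_of_shift_mem (hYX hlamY) hcX hΔ' (hc0 ▸ hlamY)

/-- Let `X ⊆ λ − ℤ₊Δ` satisfy (i) `λ − α ∈ X` for all `α ∈ Δ`, and
(ii) every `μ ∈ X` is connected to `λ` by a chain in `X` whose consecutive
differences lie in `Δ`. If `Y ⊆ X` contains `λ` and is `({2},{1,2})`-closed in `X`,
then `Y = X ∩ (λ − ℤ₊Δ')` where `Δ' = {α ∈ Δ : λ − α ∈ Y}`. -/
theorem statement14 {V : Type*} [AddCommGroup V] [Module ℝ V]
    (Δ : Set V) (hfin : Δ.Finite)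
    (hind : LinearIndependent ℝ (fun x : Δ => (x : V)))
    (lam : V) (X : Set V)
    (hX : X ⊆ {x : V | ∃ q ∈ AddSubmonoid.closure Δ, x = lam - q})
    (h1 : ∀ α ∈ Δ, lam - α ∈ X)
    (h2 : ∀ μ ∈ X, ∃ (N : ℕ) (c : Fin (N + 1) → V),
      c 0 = lam ∧ c (Fin.last N) = μ ∧ (∀ j, c j ∈ X) ∧
      ∀ j : Fin N, c j.castSucc - c j.succ ∈ Δ)
    (Y : Set V) (hYX : Y ⊆ X) (hlamY : lam ∈ Y)
    (hcl : ∀ y₁ ∈ Y, ∀ y₂ ∈ Y, ∀ x₁ ∈ X, ∀ x₂ ∈ X,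
      y₁ + y₂ = x₁ + x₂ → x₁ ∈ Y ∧ x₂ ∈ Y) :
    Y = X ∩ {x : V | ∃ q ∈ AddSubmonoid.closure {α ∈ Δ | lam - α ∈ Y}, x = lam - q} :=
  statement14_general Δ hind lam X h1 h2 Y hYX hlamY hcl
end

section
/- Let V be a real vector space, Δ ⊆ V a finite linearly independent subset, λ ∈ V, 𝔸 a nonzero additive subgroup of (ℝ,+), and X ⊆ λ − ℤ₊Δ a subset such that λ − nα ∈ X for every α ∈ Δ and every integer n ≥ 0. Then every nonempty weak 𝔸-face Y of X contains λ. -/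
open Finsupp

/-! Write a point `y` of `Y` as `λ - (α₁ + ⋯ + αₙ)` with `αᵢ ∈ Δ`. The `n + 1` points `λ` and
`λ - (n + 1) αᵢ` lie in `X` and have barycentre `y`. Putting a weight `a > 0` from `𝔸` on each of
them and the weight `(n + 1) a` on `y` gives two admissible functions with the same `ℓ` and `ℓ⃗`,
so the weak-face property puts all of these points, `λ` among them, into `Y`. -/

theorem AddSubgroup.exists_pos_mem_of_ne_bot {G : Type*} [AddCommGroup G] [LinearOrder G]
    [IsOrderedAddMonoid G] {H : AddSubgroup G} (hH : H ≠ ⊥) : ∃ a ∈ H, 0 < a := by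
  obtain ⟨⟨x, hx⟩, hx0⟩ := AddSubgroup.ne_bot_iff_exists_ne_zero.mp hH
  exact ⟨|x|, abs_mem_iff.mpr hx, abs_pos.mpr fun h => hx0 (Subtype.ext h)⟩

namespace Multiset

theorem sum_cons_map_sub_nsmul {M : Type*} [AddCommGroup M] (l : Multiset M) (x : M) :
    (x ::ₘ l.map fun α => x - (card l + 1) • α).sum = (card l + 1) • (x - l.sum) := by
  rw [sum_cons, sum_map_sub, map_const', sum_replicate, sum_map_nsmul, map_id', nsmul_sub]
  simp only [add_nsmul, one_nsmul]
  abel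

section UniformWeight

variable {α : Type*}

open scoped Classical in
noncomputable def uniformWeight (s : Multiset α) (a : ℝ) : α →₀ ℝ :=
  (toFinsupp s).mapRange (fun n : ℕ => (n : ℝ) * a) (by simp)

open scoped Classical in
theorem uniformWeight_apply (s : Multiset α) (a : ℝ) (v : α) :
    s.uniformWeight a v = s.count v * a := by
  rw [uniformWeight, mapRange_apply, toFinsupp_apply]

open scoped Classical in
theorem support_uniformWeight (s : Multiset α) {a : ℝ} (ha : a ≠ 0) :
    (s.uniformWeight a).support = s.toFinset := by
  ext v
  simp [uniformWeight_apply, ha]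

end UniformWeight

end Multiset

section WeakFace

open Multiset

variable {V : Type*} [AddCommGroup V] [Module ℝ V]

theorem isFinSupp_single {Y : Set V} {R : Set ℝ} {y : V} (hy : y ∈ Y) {r : ℝ} (hr : r ∈ R) :
    IsFinSupp Y R (single y r) := by
  classical
  refine ⟨(Finset.coe_subset.mpr support_single_subset).trans (by simpa using hy), fun v => ?_⟩
  rw [single_apply]
  split_ifs
  exacts [Or.inl hr, Or.inr rfl]

theorem natCast_mul_mem_rplus {A : AddSubmonoid ℝ} {a : ℝ} (ha : a ∈ A) (ha0 : 0 ≤ a) (n : ℕ) :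
    (n : ℝ) * a ∈ Rplus A :=
  ⟨by rw [← nsmul_eq_mul]; exact A.nsmul_mem ha n, Set.mem_Ici.mpr (by positivity)⟩

theorem ell_uniformWeight (s : Multiset V) {a : ℝ} (ha : a ≠ 0) :
    ell (s.uniformWeight a) = card s * a := by
  classical
  rw [ell, Finsupp.sum, s.support_uniformWeight ha]
  simp_rw [uniformWeight_apply, ← Finset.sum_mul]
  rw [← Nat.cast_sum, toFinset_sum_count_eq]

theorem vell_uniformWeight (s : Multiset V) {a : ℝ} (ha : a ≠ 0) :
    vell (s.uniformWeight a) = a • s.sum := by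
  classical
  rw [vell, Finsupp.sum, s.support_uniformWeight ha, Finset.sum_multiset_count, Finset.smul_sum]
  refine Finset.sum_congr rfl fun v _ => ?_
  rw [uniformWeight_apply, ← Nat.cast_smul_eq_nsmul ℝ, smul_smul, mul_comm]

theorem IsWeakFace.forall_mem_of_sum_eq_card_nsmul {X Y : Set V} {A : AddSubmonoid ℝ}
    (hface : IsWeakFace X Y A) {a : ℝ} (ha : a ∈ A) (ha0 : 0 < a) {s : Multiset V}
    (hs : s ≠ 0) (hsX : ∀ p ∈ s, p ∈ X) {y : V} (hy : y ∈ Y) (hsum : s.sum = card s • y) :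
    ∀ p ∈ s, p ∈ Y := by
  classical
  have hcard : 0 < (card s : ℝ) := by exact_mod_cast card_pos.mpr hs
  have hf : IsFinSupp X (Rplus A) (s.uniformWeight a) :=
    ⟨fun p hp => hsX p (by simpa [s.support_uniformWeight ha0.ne'] using hp),
      fun v => Or.inl (natCast_mul_mem_rplus ha ha0.le _)⟩
  have hg : IsFinSupp Y (Rplus A) (single y (card s * a)) :=
    isFinSupp_single hy (natCast_mul_mem_rplus ha ha0.le _)
  have hsupp := hface _ _ hf hg
    (by rw [ell_uniformWeight s ha0.ne', ell, sum_single_index rfl])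
    (by rw [ell, sum_single_index rfl]; exact mul_pos hcard ha0)
    (by rw [vell_uniformWeight s ha0.ne', vell, sum_single_index (zero_smul ℝ y), hsum,
      ← Nat.cast_smul_eq_nsmul ℝ, smul_smul, mul_comm])
  intro p hp
  exact hsupp (by simpa [s.support_uniformWeight ha0.ne'] using hp)

end WeakFace

theorem statement16_general {V : Type*} [AddCommGroup V] [Module ℝ V]
    (𝔸 : AddSubgroup ℝ) (h𝔸 : 𝔸 ≠ ⊥)
    (Δ : Set V)
    (lam : V) (X : Set V)
    (hX : X ⊆ {x : V | ∃ q ∈ AddSubmonoid.closure Δ, x = lam - q})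
    (hstring : ∀ α ∈ Δ, ∀ n : ℕ, lam - n • α ∈ X)
    (Y : Set V) (hYX : Y ⊆ X) (hne : Y.Nonempty)
    (hface : IsWeakFace X Y (𝔸 : Set ℝ)) :
    lam ∈ Y := by
  obtain ⟨a, ha, ha0⟩ := AddSubgroup.exists_pos_mem_of_ne_bot h𝔸
  obtain ⟨y, hy⟩ := hne
  obtain ⟨q, hq, rfl⟩ := hX (hYX hy)
  obtain ⟨l, hlΔ, rfl⟩ := AddSubmonoid.exists_multiset_of_mem_closure hq
  rcases eq_or_ne l 0 with rfl | hl
  · simpa using hy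
  obtain ⟨α, hα⟩ := Multiset.exists_mem_of_ne_zero hl
  refine IsWeakFace.forall_mem_of_sum_eq_card_nsmul (A := 𝔸.toAddSubmonoid) hface ha ha0
    (s := lam ::ₘ l.map fun β => lam - (Multiset.card l + 1) • β)
    Multiset.cons_ne_zero ?_ hy ?_ lam (Multiset.mem_cons_self _ _)
  · simpa using ⟨by simpa using hstring α (hlΔ α hα) 0, fun β hβ => hstring β (hlΔ β hβ) _⟩
  · rw [Multiset.sum_cons_map_sub_nsmul, Multiset.card_cons, Multiset.card_map]

/-- If `X ⊆ λ − ℤ₊Δ` contains `λ − nα` for every `α ∈ Δ` and `n ≥ 0`,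
then every nonempty weak `𝔸`-face `Y` of `X` contains `λ`. -/
theorem statement16 {V : Type*} [AddCommGroup V] [Module ℝ V]
    (𝔸 : AddSubgroup ℝ) (h𝔸 : 𝔸 ≠ ⊥)
    (Δ : Set V) (hfin : Δ.Finite)
    (hind : LinearIndependent ℝ (fun x : Δ => (x : V)))
    (lam : V) (X : Set V)
    (hX : X ⊆ {x : V | ∃ q ∈ AddSubmonoid.closure Δ, x = lam - q})
    (hstring : ∀ α ∈ Δ, ∀ n : ℕ, lam - n • α ∈ X)
    (Y : Set V) (hYX : Y ⊆ X) (hne : Y.Nonempty)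
    (hface : IsWeakFace X Y (𝔸 : Set ℝ)) :
    lam ∈ Y :=
  statement16_general 𝔸 h𝔸 Δ lam X hX hstring Y hYX hne hface
end
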